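/- Let f be an irreducible Weierstrass polynomial with Puiseux characteristic (b₀,...,b_g) and fix a Newton–Puiseux root γ of f. For j ∈ {1,...,g}, the number of Newton–Puiseux roots γ_i of f with contact order O(γ_i, γ) = b_j/b₀ is exactly l_{j-1} - l_j, and the number with O(γ_i,γ) ≥ b_{j}/b₀ (including γ itself) is l_{j-1}. -/

import Mathlib

/-!
Twisting by `ω ^ j` multiplies the coefficient of `x^{i/n}` by `ω^{j i}`, so `γ_j` agrees
with `γ` below `x^{b_m/n}` iff `n ∣ j i` for every exponent `i` of `γ` below `b_m`. These
exponents, together with `n`, have gcd `l_{m-1}`, so the condition reads `n ∣ j l_{m-1}`, which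
holds for exactly `l_{m-1}` residues `j` modulo `n`. Disagreeing at `b_m` in addition removes
those with `n ∣ j gcd(l_{m-1}, b_m) = j l_m`.
-/

noncomputable section

open Polynomial

/-- The substitution `x^{1/n} ↦ ε·x^{1/n}` on fractional power series: it sends
`Σ a_{i} x^{i/n}` to `Σ a_{i} ε^{i} x^{i/n}` (here the exponent of `ε` at `x^q`
is the integer `q·n`). -/
def twist (n : ℕ) (ε : ℂ) (γ : HahnSeries ℚ ℂ) : HahnSeries ℚ ℂ where
  coeff q := ε ^ (q * n : ℚ).num * γ.coeff q
  isPWO_support' := γ.isPWO_support.mono (by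
    intro q hq
    simp only [Function.mem_support] at hq ⊢
    intro h
    simp [h] at hq)

open scoped Classical

open Finset

theorem Nat.card_filter_range_dvd {k n : ℕ} (hk : 0 < k) (hkn : k ∣ n) :
    #{j ∈ range n | k ∣ j} = n / k := by
  obtain ⟨c, rfl⟩ := hkn
  have hmultiples : {j ∈ range (k * c) | k ∣ j} = (range c).image (k * ·) := by
    ext j
    simp only [mem_filter, mem_range, mem_image]
    constructor
    · rintro ⟨hj, t, rfl⟩
      exact ⟨t, lt_of_mul_lt_mul_left hj (Nat.zero_le k), rfl⟩
    · rintro ⟨t, ht, rfl⟩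
      exact ⟨Nat.mul_lt_mul_of_pos_left ht hk, dvd_mul_right k t⟩
  rw [hmultiples, Finset.card_image_of_injective _ (mul_right_injective₀ hk.ne'), card_range,
    Nat.mul_div_cancel_left c hk]

theorem Nat.card_filter_range_dvd_mul {n d : ℕ} (hn : 0 < n) (hd : d ∣ n) :
    #{j ∈ range n | n ∣ j * d} = d := by
  have hd0 : 0 < d := Nat.pos_of_dvd_of_pos hd hn
  have hquot : ∀ j, n ∣ j * d ↔ n / d ∣ j := fun j => by
    rw [Nat.div_dvd_iff_dvd_mul hd hd0, mul_comm]
  rw [filter_congr fun j _ => hquot j,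
    Nat.card_filter_range_dvd (Nat.div_pos (Nat.le_of_dvd hn hd) hd0) (Nat.div_dvd_of_dvd hd),
    Nat.div_div_self hd hn.ne']

section Twist

variable {n : ℕ} (γ : HahnSeries ℚ ℂ)

theorem twist_coeff (ε : ℂ) (q : ℚ) :
    (twist n ε γ).coeff q = ε ^ (q * n).num * γ.coeff q := rfl

theorem twist_coeff_natCast_div (hn : n ≠ 0) (ε : ℂ) (i : ℕ) :
    (twist n ε γ).coeff ((i : ℚ) / n) = ε ^ i * γ.coeff ((i : ℚ) / n) := by
  rw [twist_coeff, div_mul_cancel₀ _ (Nat.cast_ne_zero.2 hn), Rat.num_natCast, zpow_natCast]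

variable {ω : ℂ} (hω : IsPrimitiveRoot ω n)
include hω

theorem IsPrimitiveRoot.twist_pow_coeff_eq_iff (hn : n ≠ 0) (j i : ℕ)
    (hi : γ.coeff ((i : ℚ) / n) ≠ 0) :
    (twist n (ω ^ j) γ).coeff ((i : ℚ) / n) = γ.coeff ((i : ℚ) / n) ↔ n ∣ j * i := by
  rw [twist_coeff_natCast_div γ hn, ← pow_mul, ← hω.pow_eq_one_iff_dvd, mul_eq_right₀ hi]

theorem IsPrimitiveRoot.twist_pow_coeff_eq_below_iff (hn : n ≠ 0)
    (hsupp : γ.support ⊆ Set.range (fun i : ℕ => (i : ℚ) / n)) (j r : ℕ) :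
    (∀ q : ℚ, q < (r : ℚ) / n → (twist n (ω ^ j) γ).coeff q = γ.coeff q) ↔
      ∀ i : ℕ, γ.coeff ((i : ℚ) / n) ≠ 0 → i < r → n ∣ j * i := by
  have hnQ : (0 : ℚ) < n := by positivity
  constructor
  · intro hagree i hi hir
    refine (hω.twist_pow_coeff_eq_iff γ hn j i hi).1 (hagree _ ?_)
    exact div_lt_div_of_pos_right (by exact_mod_cast hir) hnQ
  · intro hdvd q hq
    by_cases hc : γ.coeff q = 0
    · rw [twist_coeff, hc, mul_zero]
    · obtain ⟨i, rfl⟩ := hsupp hc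
      refine (hω.twist_pow_coeff_eq_iff γ hn j i hc).2 (hdvd i hc ?_)
      exact_mod_cast (div_lt_div_iff_of_pos_right hnQ).1 hq

end Twist

namespace PuiseuxCharacteristic

variable {S : Set ℕ} {b l : ℕ → ℕ} {g : ℕ}

theorem l_dvd_of_le (hl : ∀ k, k < g → l (k + 1) = Nat.gcd (l k) (b (k + 1)))
    {k k' : ℕ} (hkk' : k ≤ k') (hk' : k' ≤ g) : l k' ∣ l k := by
  induction k', hkk' using Nat.le_induction with
  | base => exact dvd_rfl
  | succ k' _ ih =>
    rw [hl k' hk']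
    exact (Nat.gcd_dvd_left _ _).trans (ih (by omega))

variable (hchar : ∀ k, k < g →
  ({i | i ∈ S ∧ ¬ l k ∣ i}.Nonempty ∧ b (k + 1) = sInf {i | i ∈ S ∧ ¬ l k ∣ i}))
include hchar

theorem b_mem {k : ℕ} (hk : k < g) : b (k + 1) ∈ S ∧ ¬ l k ∣ b (k + 1) := by
  obtain ⟨hne, hb⟩ := hchar k hk
  exact hb ▸ Nat.sInf_mem hne

theorem l_dvd_of_mem_of_lt {k i : ℕ} (hk : k < g) (hi : i ∈ S) (hib : i < b (k + 1)) :
    l k ∣ i := by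
  by_contra hdvd
  have hle : b (k + 1) ≤ i :=
    (hchar k hk).2 ▸ Nat.sInf_le (show i ∈ {i | i ∈ S ∧ ¬ l k ∣ i} from ⟨hi, hdvd⟩)
  omega

variable (hl : ∀ k, k < g → l (k + 1) = Nat.gcd (l k) (b (k + 1)))
include hl

theorem b_lt_b_succ {k : ℕ} (hk : k + 1 < g) : b (k + 1) < b (k + 2) := by
  obtain ⟨hmem, hndvd⟩ := b_mem hchar hk
  refine lt_of_not_ge fun hle => hndvd ?_
  rcases hle.lt_or_eq with hlt | heq
  ·     exact (l_dvd_of_le hl k.le_succ hk.le).trans (l_dvd_of_mem_of_lt hchar (by omega) hmem hlt)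
  · rw [heq, hl k (by omega)]
    exact Nat.gcd_dvd_right _ _

theorem b_lt_b {k k' : ℕ} (hkk' : k < k') (hk' : k' < g) : b (k + 1) < b (k' + 1) := by
  induction k', hkk' using Nat.le_induction with
  | base => exact b_lt_b_succ hchar hl hk'
  | succ k' hkk' ih => exact (ih (by omega)).trans (b_lt_b_succ hchar hl hk')

/-- `l k` is the gcd of `l 0` and of the exponents in `S` below `b (k + 1)`. -/
theorem dvd_mul_l_iff {k : ℕ} (hk : k < g) (N j : ℕ) :
    N ∣ j * l k ↔ N ∣ j * l 0 ∧ ∀ i ∈ S, i < b (k + 1) → N ∣ j * i := by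
  refine ⟨fun h => ⟨h.trans (mul_dvd_mul_left j (l_dvd_of_le hl k.zero_le hk.le)),
    fun i hi hib => h.trans (mul_dvd_mul_left j (l_dvd_of_mem_of_lt hchar hk hi hib))⟩, ?_⟩
  rintro ⟨h0, hS⟩
  suffices ∀ k' ≤ k, N ∣ j * l k' from this k le_rfl
  intro k' hk'
  induction k' with
  | zero => exact h0
  | succ k' ih =>
    rw [hl k' (by omega), ← Nat.gcd_mul_left]
    exact Nat.dvd_gcd (ih (by omega))
      (hS _ (b_mem hchar (by omega)).1 (b_lt_b hchar hl hk' hk))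

end PuiseuxCharacteristic

open PuiseuxCharacteristic in
theorem count_roots_with_given_contact_general (n g : ℕ) (hn : 0 < n)
    (γ : HahnSeries ℚ ℂ)
    (hγsupp : γ.support ⊆ {q : ℚ | ∃ i : ℕ, 1 ≤ i ∧ q = (i : ℚ) / n})
    (ω : ℂ) (hω : IsPrimitiveRoot ω n)
    (b l : ℕ → ℕ)
    (hl0 : l 0 = n)
    (hl : ∀ m, m < g → l (m + 1) = Nat.gcd (l m) (b (m + 1)))
    (hchar : ∀ m, m < g →
      ({i : ℕ | γ.coeff ((i : ℚ) / n) ≠ 0 ∧ ¬ l m ∣ i}.Nonempty ∧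
       b (m + 1) = sInf {i : ℕ | γ.coeff ((i : ℚ) / n) ≠ 0 ∧ ¬ l m ∣ i}))
    (m : ℕ) (hm1 : 1 ≤ m) (hmg : m ≤ g) :
    ((Finset.range n).filter (fun j =>
        (∀ q : ℚ, q < (b m : ℚ) / n → (twist n (ω ^ j) γ).coeff q = γ.coeff q) ∧
        (twist n (ω ^ j) γ).coeff ((b m : ℚ) / n) ≠ γ.coeff ((b m : ℚ) / n))).card
      = l (m - 1) - l m ∧
    ((Finset.range n).filter (fun j =>
        ∀ q : ℚ, q < (b m : ℚ) / n → (twist n (ω ^ j) γ).coeff q = γ.coeff q)).card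
      = l (m - 1) := by
  obtain ⟨k, rfl⟩ : ∃ k, m = k + 1 := ⟨m - 1, by omega⟩
  have hk : k < g := hmg
  have hsupp : γ.support ⊆ Set.range (fun i : ℕ => (i : ℚ) / n) := fun q hq => by
    obtain ⟨i, -, rfl⟩ := hγsupp hq
    exact ⟨i, rfl⟩
  have hagree : ∀ j, (∀ q : ℚ, q < (b (k + 1) : ℚ) / n →
      (twist n (ω ^ j) γ).coeff q = γ.coeff q) ↔ n ∣ j * l k := fun j => by
    rw [hω.twist_pow_coeff_eq_below_iff γ hn.ne' hsupp, dvd_mul_l_iff hchar hl hk, hl0]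
    exact (and_iff_right (dvd_mul_left n j)).symm
  have hdiffer : ∀ j, (twist n (ω ^ j) γ).coeff ((b (k + 1) : ℚ) / n) ≠
      γ.coeff ((b (k + 1) : ℚ) / n) ↔ ¬ n ∣ j * b (k + 1) := fun j =>
    (hω.twist_pow_coeff_eq_iff γ hn.ne' j _ (b_mem hchar hk).1).not
  have hgcd : ∀ j, n ∣ j * l (k + 1) ↔ n ∣ j * l k ∧ n ∣ j * b (k + 1) := fun j => by
    rw [hl k hk, ← Nat.gcd_mul_left, Nat.dvd_gcd_iff]
  have hlk : l k ∣ n := hl0 ▸ l_dvd_of_le hl k.zero_le hk.le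
  have hlk' : l (k + 1) ∣ l k := l_dvd_of_le hl k.le_succ hk
  have hcontact : {j ∈ range n | (∀ q : ℚ, q < (b (k + 1) : ℚ) / n →
        (twist n (ω ^ j) γ).coeff q = γ.coeff q) ∧
        (twist n (ω ^ j) γ).coeff ((b (k + 1) : ℚ) / n) ≠ γ.coeff ((b (k + 1) : ℚ) / n)} =
      {j ∈ range n | n ∣ j * l k} \ {j ∈ range n | n ∣ j * l (k + 1)} := by
    rw [← filter_and_not]
    refine filter_congr fun j _ => ?_
    rw [hagree, hdiffer, hgcd]
    tauto
  rw [Nat.add_sub_cancel, hcontact, filter_congr fun j _ => hagree j,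
    card_sdiff_of_subset (monotone_filter_right _ fun j _ hj => ((hgcd j).1 hj).1),
    Nat.card_filter_range_dvd_mul hn hlk, Nat.card_filter_range_dvd_mul hn (hlk'.trans hlk)]
  exact ⟨rfl, rfl⟩

/-- Let `f` be an irreducible Weierstrass polynomial of degree `n = b₀` with Puiseux
characteristic `(b₀,...,b_g)` and fix a Newton–Puiseux root `γ` of `f`; the roots of `f`
are the twists `γ_j` of `γ` by the powers `ω^j` (`0 ≤ j < n`) of a primitive `n`-th root
of unity `ω`.  For `1 ≤ m ≤ g`, exactly `l_{m-1} - l_m` of the roots `γ_j` have contact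
order `O(γ_j, γ) = b_m/b₀` with `γ`, and exactly `l_{m-1}` of them (including `γ` itself)
have `O(γ_j, γ) ≥ b_m/b₀`. -/
theorem count_roots_with_given_contact (n g : ℕ) (hn : 0 < n) (hg : 1 ≤ g)
    (f : Polynomial (PowerSeries ℂ)) (hmonic : f.Monic) (hdeg : f.natDegree = n)
    (hW : ∀ j, j < n → PowerSeries.constantCoeff (f.coeff j) = 0)
    (hirr : Irreducible f)
    (γ : HahnSeries ℚ ℂ)
    (hγsupp : γ.support ⊆ {q : ℚ | ∃ i : ℕ, 1 ≤ i ∧ q = (i : ℚ) / n})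
    (hγ : Polynomial.eval₂ (HahnSeries.ofPowerSeries ℚ ℂ) γ f = 0)
    (ω : ℂ) (hω : IsPrimitiveRoot ω n)
    (b l : ℕ → ℕ)
    (hb0 : b 0 = n) (hl0 : l 0 = n)
    (hl : ∀ m, m < g → l (m + 1) = Nat.gcd (l m) (b (m + 1)))
    (hlg : l g = 1)
    (hchar : ∀ m, m < g →
      ({i : ℕ | γ.coeff ((i : ℚ) / n) ≠ 0 ∧ ¬ l m ∣ i}.Nonempty ∧
       b (m + 1) = sInf {i : ℕ | γ.coeff ((i : ℚ) / n) ≠ 0 ∧ ¬ l m ∣ i}))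
    (m : ℕ) (hm1 : 1 ≤ m) (hmg : m ≤ g) :
    ((Finset.range n).filter (fun j =>
        (∀ q : ℚ, q < (b m : ℚ) / n → (twist n (ω ^ j) γ).coeff q = γ.coeff q) ∧
        (twist n (ω ^ j) γ).coeff ((b m : ℚ) / n) ≠ γ.coeff ((b m : ℚ) / n))).card
      = l (m - 1) - l m ∧
    ((Finset.range n).filter (fun j =>
        ∀ q : ℚ, q < (b m : ℚ) / n → (twist n (ω ^ j) γ).coeff q = γ.coeff q)).card
      = l (m - 1) :=
  count_roots_with_given_contact_general n g hn γ hγsupp ω hω b l hl0 hl hchar m hm1 hmg
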